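/- arXiv:2309.09692 — 5 statements merged into one kernel-verified Lean document; each statement's English description precedes it below -/
import Mathlib

section
/- Let c₀ < 0, c₁ ∈ (0,1), and μ₀² = c₀c₁/(c₁⁴ − 1) (which is positive). Define A(t) as the 2×4 matrix A = D·B(t) where D = diag(c₁, 1/c₁) and B(t) = [[1, 0, cos(μ₀t), −sin(μ₀t)], [0, 1, sin(μ₀t), cos(μ₀t)]]. Let f¹, f² : ℝ² → ℝ be an anti-CR pair and v(z) = (z₁, z₂, f¹(z), f²(z)). Then for φ = A v: (i) det(dφ) = 1 − |∇f¹|² is independent of t; (ii) the quantity h(z,t) = Σ_{i=1}^{2} det(∇∂ₜφ_i, ∇φ_i) + det(∇ρ, ∇Y) with ρ = c₀ z₂ and Y(z,t) = ∫₀ᵗ φ₂ ds is independent of t. -/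
/-!
Every component of `φ = A(t) v`, of its time derivative and of its time integral `Y` is a linear
combination of `z₁, z₂, f¹, f²` with coefficients depending only on `t`. For an anti-CR pair
`∇f² = (∂₂f¹, -∂₁f¹)`, so each `det(∇u, ∇w)` is a polynomial in `∂₁f¹, ∂₂f¹, cos μ₀t, sin μ₀t`.
In `det(dφ)` the time enters only through `cos² μ₀t + sin² μ₀t`. In `h` the remaining
time-dependent terms are multiples of `μ₀²(c₁⁴ - 1) - c₀c₁`, which vanishes by the choice of `μ₀`.
-/

noncomputable def pd1 (f : ℝ × ℝ → ℝ) (z : ℝ × ℝ) : ℝ := fderiv ℝ f z ((1:ℝ), (0:ℝ))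
noncomputable def pd2 (f : ℝ × ℝ → ℝ) (z : ℝ × ℝ) : ℝ := fderiv ℝ f z ((0:ℝ), (1:ℝ))

/-- det(∇u, ∇w). -/
noncomputable def det2 (u w : ℝ × ℝ → ℝ) (z : ℝ × ℝ) : ℝ :=
  pd1 u z * pd2 w z - pd2 u z * pd1 w z

open Real

/-- The row `(a, b, α, β)` of a `2 × 4` matrix applied to `v(z) = (z₁, z₂, f¹(z), f²(z))`. -/
noncomputable def linComb (f1 f2 : ℝ × ℝ → ℝ) (a b α β : ℝ) (z : ℝ × ℝ) : ℝ :=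
  a * z.1 + b * z.2 + α * f1 z + β * f2 z

section LinComb

variable {f1 f2 : ℝ × ℝ → ℝ}

theorem hasFDerivAt_linComb {z : ℝ × ℝ} (hf1 : DifferentiableAt ℝ f1 z)
    (hf2 : DifferentiableAt ℝ f2 z) (a b α β : ℝ) :
    HasFDerivAt (linComb f1 f2 a b α β)
      (a • ContinuousLinearMap.fst ℝ ℝ ℝ + b • ContinuousLinearMap.snd ℝ ℝ ℝ
        + α • fderiv ℝ f1 z + β • fderiv ℝ f2 z) z :=
  (((hasFDerivAt_fst.const_mul a).add (hasFDerivAt_snd.const_mul b)).add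
    (hf1.hasFDerivAt.const_mul α)).add (hf2.hasFDerivAt.const_mul β)

theorem pd1_linComb {z : ℝ × ℝ} (hf1 : DifferentiableAt ℝ f1 z)
    (hf2 : DifferentiableAt ℝ f2 z) (a b α β : ℝ) :
    pd1 (linComb f1 f2 a b α β) z = a + α * pd1 f1 z + β * pd1 f2 z := by
  simp [pd1, (hasFDerivAt_linComb hf1 hf2 a b α β).fderiv]

theorem pd2_linComb {z : ℝ × ℝ} (hf1 : DifferentiableAt ℝ f1 z)
    (hf2 : DifferentiableAt ℝ f2 z) (a b α β : ℝ) :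
    pd2 (linComb f1 f2 a b α β) z = b + α * pd2 f1 z + β * pd2 f2 z := by
  simp [pd2, (hasFDerivAt_linComb hf1 hf2 a b α β).fderiv]

theorem det2_linComb_of_antiCR {z : ℝ × ℝ} (hf1 : DifferentiableAt ℝ f1 z)
    (hf2 : DifferentiableAt ℝ f2 z) (hCR1 : pd1 f1 z + pd2 f2 z = 0)
    (hCR2 : pd2 f1 z - pd1 f2 z = 0) (a b α β a' b' α' β' : ℝ) :
    det2 (linComb f1 f2 a b α β) (linComb f1 f2 a' b' α' β') z =
      (a + α * pd1 f1 z + β * pd2 f1 z) * (b' + α' * pd2 f1 z - β' * pd1 f1 z)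
        - (b + α * pd2 f1 z - β * pd1 f1 z) * (a' + α' * pd1 f1 z + β' * pd2 f1 z) := by
  have h12 : pd1 f2 z = pd2 f1 z := by linarith
  have h22 : pd2 f2 z = -pd1 f1 z := by linarith
  simp only [det2, pd1_linComb hf1 hf2, pd2_linComb hf1 hf2, h12, h22]
  ring

theorem deriv_linComb {a b α β : ℝ → ℝ} {a' b' α' β' t : ℝ} (ha : HasDerivAt a a' t)
    (hb : HasDerivAt b b' t) (hα : HasDerivAt α α' t) (hβ : HasDerivAt β β' t) (z : ℝ × ℝ) :
    deriv (fun s => linComb f1 f2 (a s) (b s) (α s) (β s) z) t = linComb f1 f2 a' b' α' β' z := by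
  unfold linComb
  exact ((((ha.mul_const z.1).add (hb.mul_const z.2)).add (hα.mul_const (f1 z))).add
    (hβ.mul_const (f2 z))).deriv

theorem integral_linComb {a b α β : ℝ → ℝ} (ha : Continuous a) (hb : Continuous b)
    (hα : Continuous α) (hβ : Continuous β) (s₀ s₁ : ℝ) (z : ℝ × ℝ) :
    ∫ s in s₀..s₁, linComb f1 f2 (a s) (b s) (α s) (β s) z =
      linComb f1 f2 (∫ s in s₀..s₁, a s) (∫ s in s₀..s₁, b s)
        (∫ s in s₀..s₁, α s) (∫ s in s₀..s₁, β s) z := by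
  have hi : ∀ {g : ℝ → ℝ}, Continuous g → ∀ c : ℝ,
      IntervalIntegrable (fun s => g s * c) MeasureTheory.volume s₀ s₁ :=
    fun hg c => (hg.mul continuous_const).intervalIntegrable _ _
  simp only [linComb]
  rw [intervalIntegral.integral_add ((hi ha _).add (hi hb _) |>.add (hi hα _)) (hi hβ _),
    intervalIntegral.integral_add ((hi ha _).add (hi hb _)) (hi hα _),
    intervalIntegral.integral_add (hi ha _) (hi hb _)]
  simp only [intervalIntegral.integral_mul_const]

end LinComb

theorem integral_sin_const_mul {μ : ℝ} (hμ : μ ≠ 0) (t : ℝ) :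
    ∫ s in (0:ℝ)..t, sin (μ * s) = (1 - cos (μ * t)) / μ := by
  simp [intervalIntegral.integral_comp_mul_left (fun x => sin x) hμ]
  field_simp

theorem integral_cos_const_mul {μ : ℝ} (hμ : μ ≠ 0) (t : ℝ) :
    ∫ s in (0:ℝ)..t, cos (μ * s) = sin (μ * t) / μ := by
  simp [intervalIntegral.integral_comp_mul_left (fun x => cos x) hμ]
  field_simp

section Gerstner

variable (f1 f2 : ℝ × ℝ → ℝ) (c₁ μ₀ : ℝ)

noncomputable def gerstner₁ (t : ℝ) : ℝ × ℝ → ℝ :=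
  linComb f1 f2 c₁ 0 (c₁ * cos (μ₀ * t)) (-(c₁ * sin (μ₀ * t)))

noncomputable def gerstner₂ (t : ℝ) : ℝ × ℝ → ℝ :=
  linComb f1 f2 0 c₁⁻¹ (c₁⁻¹ * sin (μ₀ * t)) (c₁⁻¹ * cos (μ₀ * t))

variable {f1 f2 c₁ μ₀}

theorem deriv_gerstner₁ (t : ℝ) (z : ℝ × ℝ) :
    deriv (fun s => gerstner₁ f1 f2 c₁ μ₀ s z) t =
      linComb f1 f2 0 0 (-(c₁ * μ₀ * sin (μ₀ * t))) (-(c₁ * μ₀ * cos (μ₀ * t))) z :=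
  (deriv_linComb (hasDerivAt_const t c₁) (hasDerivAt_const t 0)
    ((hasDerivAt_const_mul μ₀).cos.const_mul c₁) ((hasDerivAt_const_mul μ₀).sin.const_mul c₁).neg
    z).trans (by simp only [linComb]; ring)

theorem deriv_gerstner₂ (t : ℝ) (z : ℝ × ℝ) :
    deriv (fun s => gerstner₂ f1 f2 c₁ μ₀ s z) t =
      linComb f1 f2 0 0 (c₁⁻¹ * μ₀ * cos (μ₀ * t)) (-(c₁⁻¹ * μ₀ * sin (μ₀ * t))) z :=
  (deriv_linComb (hasDerivAt_const t 0) (hasDerivAt_const t c₁⁻¹)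
    ((hasDerivAt_const_mul μ₀).sin.const_mul c₁⁻¹) ((hasDerivAt_const_mul μ₀).cos.const_mul c₁⁻¹)
    z).trans (by simp only [linComb]; ring)

theorem integral_gerstner₂ (hμ : μ₀ ≠ 0) (t : ℝ) (z : ℝ × ℝ) :
    ∫ s in (0:ℝ)..t, gerstner₂ f1 f2 c₁ μ₀ s z =
      linComb f1 f2 0 (t * c₁⁻¹) (c₁⁻¹ * ((1 - cos (μ₀ * t)) / μ₀))
        (c₁⁻¹ * (sin (μ₀ * t) / μ₀)) z := by
  simp only [gerstner₂]
  rw [integral_linComb (by fun_prop) (by fun_prop) (by fun_prop) (by fun_prop)]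
  simp [integral_sin_const_mul hμ, integral_cos_const_mul hμ]

theorem det2_gerstner {z : ℝ × ℝ} (hf1 : DifferentiableAt ℝ f1 z) (hf2 : DifferentiableAt ℝ f2 z)
    (hCR1 : pd1 f1 z + pd2 f2 z = 0) (hCR2 : pd2 f1 z - pd1 f2 z = 0) (hc₁ : c₁ ≠ 0) (t : ℝ) :
    det2 (gerstner₁ f1 f2 c₁ μ₀ t) (gerstner₂ f1 f2 c₁ μ₀ t) z
      = 1 - (pd1 f1 z ^ 2 + pd2 f1 z ^ 2) := by
  rw [gerstner₁, gerstner₂, det2_linComb_of_antiCR hf1 hf2 hCR1 hCR2]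
  linear_combination (1 - (pd1 f1 z ^ 2 + pd2 f1 z ^ 2)) * mul_inv_cancel₀ hc₁
    - c₁ * c₁⁻¹ * (pd1 f1 z ^ 2 + pd2 f1 z ^ 2) * sin_sq_add_cos_sq (μ₀ * t)

theorem gerstner_h_eq {z : ℝ × ℝ} (hf1 : DifferentiableAt ℝ f1 z) (hf2 : DifferentiableAt ℝ f2 z)
    (hCR1 : pd1 f1 z + pd2 f2 z = 0) (hCR2 : pd2 f1 z - pd1 f2 z = 0) (hc₁ : c₁ ≠ 0)
    {c₀ : ℝ} (hμ : μ₀ ≠ 0) (hc₀μ : c₀ * c₁ = μ₀ ^ 2 * (c₁ ^ 4 - 1)) (t : ℝ) :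
    det2 (fun z => deriv (fun s => gerstner₁ f1 f2 c₁ μ₀ s z) t) (gerstner₁ f1 f2 c₁ μ₀ t) z
      + det2 (fun z => deriv (fun s => gerstner₂ f1 f2 c₁ μ₀ s z) t) (gerstner₂ f1 f2 c₁ μ₀ t) z
      + det2 (linComb f1 f2 0 c₀ 0 0) (fun z => ∫ s in (0:ℝ)..t, gerstner₂ f1 f2 c₁ μ₀ s z) z
      = -(c₁ ^ 2 * μ₀ + μ₀ / c₁ ^ 2) * (pd1 f1 z ^ 2 + pd2 f1 z ^ 2)
        - c₀ / (c₁ * μ₀) * pd1 f1 z := by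
  simp only [deriv_gerstner₁, deriv_gerstner₂, integral_gerstner₂ hμ]
  simp only [gerstner₁, gerstner₂, det2_linComb_of_antiCR hf1 hf2 hCR1 hCR2]
  field_simp
  linear_combination
    -(μ₀ ^ 2 * (c₁ ^ 4 + 1) * (pd1 f1 z ^ 2 + pd2 f1 z ^ 2)) * sin_sq_add_cos_sq (μ₀ * t)
    + (pd1 f1 z * cos (μ₀ * t) - pd2 f1 z * sin (μ₀ * t)) * hc₀μ

end Gerstner

/-- Verification of the Gerstner-type solution (24) of the 2D Euler–Boussinesq equations:
φ = A·v with A = diag(c₁,1/c₁)·[[1,0,cos μ₀t,−sin μ₀t],[0,1,sin μ₀t,cos μ₀t]],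
v = (z₁,z₂,f¹,f²), (f¹,f²) an anti-CR pair, ρ = c₀z₂:
(i) det(dφ) = 1 − |∇f¹|², independent of t; (ii) h is independent of t. -/
theorem gerstner_type_solution_2d
    (c₀ c₁ μ₀ : ℝ) (hc₀ : c₀ < 0) (hc₁0 : 0 < c₁) (hc₁1 : c₁ < 1)
    (hμ₀ : μ₀ ^ 2 = c₀ * c₁ / (c₁ ^ 4 - 1))
    (f1 f2 : ℝ × ℝ → ℝ) (hf1 : ContDiff ℝ 1 f1) (hf2 : ContDiff ℝ 1 f2)
    (hCR1 : ∀ z, pd1 f1 z + pd2 f2 z = 0)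
    (hCR2 : ∀ z, pd2 f1 z - pd1 f2 z = 0)
    (φ1 φ2 : ℝ × ℝ → ℝ → ℝ)
    (hφ1 : ∀ z t, φ1 z t = c₁ * (z.1 + f1 z * Real.cos (μ₀ * t) - f2 z * Real.sin (μ₀ * t)))
    (hφ2 : ∀ z t, φ2 z t = (1 / c₁) * (z.2 + f1 z * Real.sin (μ₀ * t) + f2 z * Real.cos (μ₀ * t)))
    (ρ : ℝ × ℝ → ℝ) (hρ : ∀ z, ρ z = c₀ * z.2)
    (Y : ℝ × ℝ → ℝ → ℝ) (hY : ∀ z t, Y z t = ∫ s in (0:ℝ)..t, φ2 z s)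
    (h : ℝ × ℝ → ℝ → ℝ)
    (hh : ∀ z t, h z t =
      det2 (fun z => deriv (fun s => φ1 z s) t) (fun z => φ1 z t) z
      + det2 (fun z => deriv (fun s => φ2 z s) t) (fun z => φ2 z t) z
      + det2 ρ (fun z => Y z t) z) :
    (∀ t z, det2 (fun z => φ1 z t) (fun z => φ2 z t) z
        = 1 - ((pd1 f1 z) ^ 2 + (pd2 f1 z) ^ 2))
    ∧ (∀ z t t', h z t = h z t') := by
  have hc₁ : c₁ ≠ 0 := hc₁0.ne'
  have hc₁4 : c₁ ^ 4 - 1 < 0 := by linarith [pow_lt_one₀ hc₁0.le hc₁1 (n := 4) (by norm_num)]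
  have hμ : μ₀ ≠ 0 := by
    rintro rfl
    exact (div_pos_of_neg_of_neg (mul_neg_of_neg_of_pos hc₀ hc₁0) hc₁4).ne' (by simpa using hμ₀.symm)
  have hc₀μ : c₀ * c₁ = μ₀ ^ 2 * (c₁ ^ 4 - 1) := by rw [hμ₀, div_mul_cancel₀ _ hc₁4.ne]
  obtain rfl : φ1 = fun z t => gerstner₁ f1 f2 c₁ μ₀ t z :=
    funext₂ fun z t => by rw [hφ1, gerstner₁, linComb]; ring
  obtain rfl : φ2 = fun z t => gerstner₂ f1 f2 c₁ μ₀ t z :=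
    funext₂ fun z t => by rw [hφ2, gerstner₂, linComb]; ring
  obtain rfl : ρ = linComb f1 f2 0 c₀ 0 0 := funext fun z => by rw [hρ, linComb]; ring
  obtain rfl : Y = fun z t => ∫ s in (0:ℝ)..t, gerstner₂ f1 f2 c₁ μ₀ s z := funext₂ hY
  have hd1 : Differentiable ℝ f1 := hf1.differentiable one_ne_zero
  have hd2 : Differentiable ℝ f2 := hf2.differentiable one_ne_zero
  refine ⟨fun t z => det2_gerstner (hd1 z) (hd2 z) (hCR1 z) (hCR2 z) hc₁ t, fun z t t' => ?_⟩
  have hz := fun t => (hh z t).trans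
    (gerstner_h_eq (hd1 z) (hd2 z) (hCR1 z) (hCR2 z) hc₁ hμ hc₀μ t)
  rw [hz, hz]
end

section
/- Let c₀ ≠ 0, let φ(z,t) = A(t)v(z) with v = (z₁, z₂, f¹(z₁), f²(z₂)), A(t) = diag(10/c₀, c₀/10) · [[t⁻², 0, 0, t³],[0, t², t⁻³, 0]], and let ρ = c₀z₂. Then for t > 0: (i) det(dφ) = 1 − (f¹)'(z₁)(f²)'(z₂) is independent of t; (ii) h(z,t) = Σᵢ det(∇∂ₜφᵢ, ∇φᵢ) + det(∇ρ, ∇Y) is independent of t, where Y = ∫ φ₂ dt is chosen as the antiderivative (c₀/10)(t³z₂/3 + t⁻²f¹(z₁)/(−2)). -/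
lemma pd_form1 (a b : ℝ) (g : ℝ → ℝ) (hg : Differentiable ℝ g) (z : ℝ × ℝ) :
    pd1 (fun z : ℝ × ℝ => a * z.1 + b * g z.2) z = a ∧
    pd2 (fun z : ℝ × ℝ => a * z.1 + b * g z.2) z = b * deriv g z.2 := by
  have H1 : HasFDerivAt (fun p : ℝ × ℝ => p.1) (ContinuousLinearMap.fst ℝ ℝ ℝ) z :=
    hasFDerivAt_fst
  have H2 : HasFDerivAt (fun p : ℝ × ℝ => g p.2)
      ((deriv g z.2) • ContinuousLinearMap.snd ℝ ℝ ℝ) z :=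
    ((hg z.2).hasDerivAt).comp_hasFDerivAt z hasFDerivAt_snd
  have H : HasFDerivAt (fun z : ℝ × ℝ => a * z.1 + b * g z.2) _ z :=
    (H1.const_mul a).add (H2.const_mul b)
  constructor <;> simp [pd1, pd2, H.fderiv]

lemma pd_form2 (a b : ℝ) (g : ℝ → ℝ) (hg : Differentiable ℝ g) (z : ℝ × ℝ) :
    pd1 (fun z : ℝ × ℝ => a * g z.1 + b * z.2) z = a * deriv g z.1 ∧
    pd2 (fun z : ℝ × ℝ => a * g z.1 + b * z.2) z = b := by
  have H1 : HasFDerivAt (fun p : ℝ × ℝ => g p.1)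
      ((deriv g z.1) • ContinuousLinearMap.fst ℝ ℝ ℝ) z :=
    ((hg z.1).hasDerivAt).comp_hasFDerivAt z hasFDerivAt_fst
  have H2 : HasFDerivAt (fun p : ℝ × ℝ => p.2) (ContinuousLinearMap.snd ℝ ℝ ℝ) z :=
    hasFDerivAt_snd
  have H : HasFDerivAt (fun z : ℝ × ℝ => a * g z.1 + b * z.2) _ z :=
    (H1.const_mul a).add (H2.const_mul b)
  constructor <;> simp [pd1, pd2, H.fderiv]

lemma deriv_pow_comb (c x y : ℝ) (m n : ℤ) (t : ℝ) (ht : t ≠ 0) :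
    deriv (fun s : ℝ => c * (s ^ m * x + s ^ n * y)) t
      = c * (((m : ℝ) * t ^ (m - 1)) * x + ((n : ℝ) * t ^ (n - 1)) * y) := by
  have H := (((hasDerivAt_zpow m t (Or.inl ht)).mul_const x).add
    ((hasDerivAt_zpow n t (Or.inl ht)).mul_const y)).const_mul c
  exact H.deriv

/-- Verification of the explicit power-law solution of Case 2 (2D, m = 4):
φ = A·v with A = diag(10/c₀, c₀/10)·[[t⁻²,0,0,t³],[0,t²,t⁻³,0]],
v = (z₁,z₂,f¹(z₁),f²(z₂)), ρ = c₀z₂. For t > 0: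
(i) det(dφ) = 1 − (f¹)'(z₁)(f²)'(z₂); (ii) h is independent of t. -/
theorem power_law_solution_2d
    (c₀ : ℝ) (hc₀ : c₀ ≠ 0)
    (f1 f2 : ℝ → ℝ) (hf1 : Differentiable ℝ f1) (hf2 : Differentiable ℝ f2)
    (φ1 φ2 : ℝ × ℝ → ℝ → ℝ)
    (hφ1 : ∀ z t, φ1 z t = (10 / c₀) * (t ^ (-2 : ℤ) * z.1 + t ^ (3 : ℤ) * f2 z.2))
    (hφ2 : ∀ z t, φ2 z t = (c₀ / 10) * (t ^ (2 : ℤ) * z.2 + t ^ (-3 : ℤ) * f1 z.1))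
    (ρ : ℝ × ℝ → ℝ) (hρ : ∀ z, ρ z = c₀ * z.2)
    (Y : ℝ × ℝ → ℝ → ℝ)
    (hY : ∀ z t, Y z t = (c₀ / 10) * (t ^ (3 : ℤ) * z.2 / 3 + t ^ (-2 : ℤ) * f1 z.1 / (-2)))
    (h : ℝ × ℝ → ℝ → ℝ)
    (hh : ∀ z t, h z t =
      det2 (fun z => deriv (fun s => φ1 z s) t) (fun z => φ1 z t) z
      + det2 (fun z => deriv (fun s => φ2 z s) t) (fun z => φ2 z t) z
      + det2 ρ (fun z => Y z t) z) :
    (∀ t : ℝ, 0 < t → ∀ z : ℝ × ℝ,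
        det2 (fun z => φ1 z t) (fun z => φ2 z t) z = 1 - deriv f1 z.1 * deriv f2 z.2)
    ∧ (∀ z : ℝ × ℝ, ∀ t t' : ℝ, 0 < t → 0 < t' → h z t = h z t') := by
  have part1 : ∀ t : ℝ, 0 < t → ∀ z : ℝ × ℝ,
      det2 (fun z => φ1 z t) (fun z => φ2 z t) z = 1 - deriv f1 z.1 * deriv f2 z.2 := by
    intro t ht z
    have ht0 : t ≠ 0 := ht.ne'
    have e1 : (fun z : ℝ × ℝ => φ1 z t)
        = fun z : ℝ × ℝ => (10 / c₀ * t ^ (-2:ℤ)) * z.1 + (10 / c₀ * t ^ (3:ℤ)) * f2 z.2 := by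
      funext z; rw [hφ1]; ring
    have e2 : (fun z : ℝ × ℝ => φ2 z t)
        = fun z : ℝ × ℝ => (c₀ / 10 * t ^ (-3:ℤ)) * f1 z.1 + (c₀ / 10 * t ^ (2:ℤ)) * z.2 := by
      funext z; rw [hφ2]; ring
    obtain ⟨p11, p12⟩ := pd_form1 (10 / c₀ * t ^ (-2:ℤ)) (10 / c₀ * t ^ (3:ℤ)) f2 hf2 z
    obtain ⟨p21, p22⟩ := pd_form2 (c₀ / 10 * t ^ (-3:ℤ)) (c₀ / 10 * t ^ (2:ℤ)) f1 hf1 z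
    rw [det2, e1, e2, p11, p12, p21, p22]
    field_simp
  refine ⟨part1, ?_⟩
  have key : ∀ t : ℝ, 0 < t → ∀ z : ℝ × ℝ,
      h z t = -500 / c₀ ^ 2 * deriv f2 z.2 := by
    intro t ht z
    have ht0 : t ≠ 0 := ht.ne'
    have e1 : (fun z : ℝ × ℝ => φ1 z t)
        = fun z : ℝ × ℝ => (10 / c₀ * t ^ (-2:ℤ)) * z.1 + (10 / c₀ * t ^ (3:ℤ)) * f2 z.2 := by
      funext z; rw [hφ1]; ring
    have e2 : (fun z : ℝ × ℝ => φ2 z t)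
        = fun z : ℝ × ℝ => (c₀ / 10 * t ^ (-3:ℤ)) * f1 z.1 + (c₀ / 10 * t ^ (2:ℤ)) * z.2 := by
      funext z; rw [hφ2]; ring
    have e1t : (fun z : ℝ × ℝ => deriv (fun s => φ1 z s) t)
        = fun z : ℝ × ℝ => (-20 / c₀ * t ^ (-3:ℤ)) * z.1 + (30 / c₀ * t ^ (2:ℤ)) * f2 z.2 := by
      funext z
      have hfun : (fun s => φ1 z s)
          = fun s : ℝ => (10 / c₀) * (s ^ (-2:ℤ) * z.1 + s ^ (3:ℤ) * f2 z.2) :=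
        funext fun s => hφ1 z s
      rw [hfun, deriv_pow_comb _ _ _ _ _ _ ht0]
      norm_num
      ring
    have e2t : (fun z : ℝ × ℝ => deriv (fun s => φ2 z s) t)
        = fun z : ℝ × ℝ => (-3 * c₀ / 10 * t ^ (-4:ℤ)) * f1 z.1 + (c₀ / 5 * t ^ (1:ℤ)) * z.2 := by
      funext z
      have hfun : (fun s => φ2 z s)
          = fun s : ℝ => (c₀ / 10) * (s ^ (2:ℤ) * z.2 + s ^ (-3:ℤ) * f1 z.1) :=
        funext fun s => hφ2 z s
      rw [hfun, deriv_pow_comb _ _ _ _ _ _ ht0]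
      norm_num
      ring
    have eρ : ρ = fun z : ℝ × ℝ => (0 : ℝ) * id z.1 + c₀ * z.2 := by
      funext z; rw [hρ]; simp
    have eY : (fun z : ℝ × ℝ => Y z t)
        = fun z : ℝ × ℝ => (c₀ / 10 * t ^ (-2:ℤ) / (-2)) * f1 z.1
            + (c₀ / 10 * t ^ (3:ℤ) / 3) * z.2 := by
      funext z; rw [hY]; ring
    obtain ⟨q11, q12⟩ := pd_form1 (-20 / c₀ * t ^ (-3:ℤ)) (30 / c₀ * t ^ (2:ℤ)) f2 hf2 z
    obtain ⟨p11, p12⟩ := pd_form1 (10 / c₀ * t ^ (-2:ℤ)) (10 / c₀ * t ^ (3:ℤ)) f2 hf2 z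
    obtain ⟨q21, q22⟩ := pd_form2 (-3 * c₀ / 10 * t ^ (-4:ℤ)) (c₀ / 5 * t ^ (1:ℤ)) f1 hf1 z
    obtain ⟨p21, p22⟩ := pd_form2 (c₀ / 10 * t ^ (-3:ℤ)) (c₀ / 10 * t ^ (2:ℤ)) f1 hf1 z
    obtain ⟨r1, r2⟩ := pd_form2 (0 : ℝ) c₀ id differentiable_id z
    obtain ⟨y1, y2⟩ := pd_form2 (c₀ / 10 * t ^ (-2:ℤ) / (-2)) (c₀ / 10 * t ^ (3:ℤ) / 3) f1 hf1 z
    rw [hh, det2, det2, det2, e1, e1t, e2, e2t, eρ, eY,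
      q11, q12, p11, p12, q21, q22, p21, p22, r1, r2, y1, y2]
    field_simp
    ring
  intro z t t' ht ht'
  rw [key t ht z, key t' ht' z]
end

section
/- For t > 0 and c₁ ∈ ℝ, let A(t) = [[0, 0, t^{−1/3}, (9/20)c₁ t^{4/3}], [−(9/20)c₁ t², −t^{1/3}, 0, 0]], v(z) = (z₁, z₂, z₂(f¹)'(z₁) + f²(z₁), f¹(z₁)), and ρ = c₁z₁. Then det(dφ) for φ = Av equals −(z₂(f¹)''(z₁) + (f²)'(z₁)) up to sign and is independent of t. -/
/-!
Both components of `φ` are affine in `z₂`. Writing `A(t) = [[0, 0, a, b], [p, -q, 0, 0]]`, the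
chain rule gives the determinant `-(a q) (z₂ (f¹)'' + (f²)') - (b q + a p) (f¹)'`.
The exponents of `t` are such that `a q = t^{-1/3} t^{1/3} = 1` and
`b q = -a p = (9/20) c₁ t^{5/3}`, which removes all dependence on `t`.
-/

theorem det2_eq_of_hasFDerivAt {u w : ℝ × ℝ → ℝ} {u' w' : ℝ × ℝ →L[ℝ] ℝ} {z : ℝ × ℝ}
    (hu : HasFDerivAt u u' z) (hw : HasFDerivAt w w' z) :
    det2 u w z = u' (1, 0) * w' (0, 1) - u' (0, 1) * w' (1, 0) := by
  rw [det2, pd1, pd2, pd1, pd2, hu.fderiv, hw.fderiv]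

theorem det2_affine_in_snd (a b p q : ℝ) {f g h : ℝ → ℝ} {f' g' h' : ℝ} {z : ℝ × ℝ}
    (hf : HasDerivAt f f' z.1) (hg : HasDerivAt g g' z.1) (hh : HasDerivAt h h' z.1) :
    det2 (fun z => a * (z.2 * g z.1 + h z.1) + b * f z.1) (fun z => p * z.1 - q * z.2) z
      = -(a * q) * (z.2 * g' + h') - (b * q) * f' - (a * p) * g z.1 := by
  have hfst : HasFDerivAt (fun z : ℝ × ℝ => z.1) (ContinuousLinearMap.fst ℝ ℝ ℝ) z :=
    hasFDerivAt_fst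
  have hsnd : HasFDerivAt (fun z : ℝ × ℝ => z.2) (ContinuousLinearMap.snd ℝ ℝ ℝ) z :=
    hasFDerivAt_snd
  have hu : HasFDerivAt (fun z => a * (z.2 * g z.1 + h z.1) + b * f z.1) _ z :=
    (((hsnd.mul (hg.comp_hasFDerivAt z hfst)).add
      (hh.comp_hasFDerivAt z hfst)).const_mul a).add ((hf.comp_hasFDerivAt z hfst).const_mul b)
  have hw : HasFDerivAt (fun z => p * z.1 - q * z.2) _ z :=
    (hfst.const_mul p).sub (hsnd.const_mul q)
  rw [det2_eq_of_hasFDerivAt hu hw]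
  simp only [add_apply, sub_apply, smul_apply, ContinuousLinearMap.coe_fst',
    ContinuousLinearMap.coe_snd', smul_eq_mul, Function.comp_apply]
  ring

theorem case3_volume_preservation_general
    (c₁ : ℝ)
    (f1 f2 : ℝ → ℝ) (hf1 : ContDiff ℝ 2 f1) (hf2 : ContDiff ℝ 1 f2)
    (φ1 φ2 : ℝ × ℝ → ℝ → ℝ)
    (hφ1 : ∀ z t, φ1 z t = t ^ ((-1 : ℝ) / 3) * (z.2 * deriv f1 z.1 + f2 z.1)
        + (9 / 20) * c₁ * t ^ ((4 : ℝ) / 3) * f1 z.1)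
    (hφ2 : ∀ z t, φ2 z t = -(9 / 20) * c₁ * t ^ (2 : ℕ) * z.1 - t ^ ((1 : ℝ) / 3) * z.2) :
    ∀ t : ℝ, 0 < t → ∀ z : ℝ × ℝ,
      det2 (fun z => φ1 z t) (fun z => φ2 z t) z
        = -(z.2 * deriv (deriv f1) z.1 + deriv f2 z.1) := by
  intro t ht z
  have hdf1 := (hf1.differentiable two_ne_zero z.1).hasDerivAt
  have hd2f1 := (hf1.differentiable_deriv_two z.1).hasDerivAt
  have hdf2 := (hf2.differentiable one_ne_zero z.1).hasDerivAt
  have hφ1t : (fun z => φ1 z t) = fun z => t ^ ((-1 : ℝ) / 3) * (z.2 * deriv f1 z.1 + f2 z.1)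
      + (9 / 20) * c₁ * t ^ ((4 : ℝ) / 3) * f1 z.1 := funext fun z => hφ1 z t
  have hφ2t : (fun z => φ2 z t) = fun z => -(9 / 20) * c₁ * t ^ (2 : ℕ) * z.1
      - t ^ ((1 : ℝ) / 3) * z.2 := funext fun z => hφ2 z t
  have haq : t ^ ((-1 : ℝ) / 3) * t ^ ((1 : ℝ) / 3) = 1 := by
    rw [← Real.rpow_add ht]; norm_num
  have hbq : t ^ ((4 : ℝ) / 3) * t ^ ((1 : ℝ) / 3) = t ^ ((-1 : ℝ) / 3) * t ^ (2 : ℕ) := by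
    rw [← Real.rpow_natCast t 2, ← Real.rpow_add ht, ← Real.rpow_add ht]; norm_num
  rw [hφ1t, hφ2t, det2_affine_in_snd _ _ _ _ hdf1 hd2f1 hdf2]
  linear_combination (-(z.2 * deriv (deriv f1) z.1 + deriv f2 z.1)) * haq
    - (9 / 20 * c₁ * deriv f1 z.1) * hbq

/-- Volume preservation for the explicit Case-3 solution (2D, m = 4):
with A = [[0,0,t^{−1/3},(9/20)c₁t^{4/3}],[−(9/20)c₁t²,−t^{1/3},0,0]],
v = (z₁,z₂,z₂(f¹)'(z₁)+f²(z₁),f¹(z₁)), the Jacobian determinant of φ = Av equals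
−(z₂(f¹)''(z₁) + (f²)'(z₁)) for all t > 0, hence is independent of t. -/
theorem case3_volume_preservation
    (c₁ : ℝ)
    (f1 f2 : ℝ → ℝ) (hf1 : ContDiff ℝ 2 f1) (hf2 : ContDiff ℝ 1 f2)
    (φ1 φ2 : ℝ × ℝ → ℝ → ℝ)
    (hφ1 : ∀ z t, φ1 z t = t ^ ((-1 : ℝ) / 3) * (z.2 * deriv f1 z.1 + f2 z.1)
        + (9 / 20) * c₁ * t ^ ((4 : ℝ) / 3) * f1 z.1)
    (hφ2 : ∀ z t, φ2 z t = -(9 / 20) * c₁ * t ^ (2 : ℕ) * z.1 - t ^ ((1 : ℝ) / 3) * z.2)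
    (ρ : ℝ × ℝ → ℝ) (hρ : ∀ z, ρ z = c₁ * z.1) :
    ∀ t : ℝ, 0 < t → ∀ z : ℝ × ℝ,
      det2 (fun z => φ1 z t) (fun z => φ2 z t) z
        = -(z.2 * deriv (deriv f1) z.1 + deriv f2 z.1) :=
  case3_volume_preservation_general c₁ f1 f2 hf1 hf2 φ1 φ2 hφ1 hφ2
end

section
/- Let θ : ℝ → ℝ be twice differentiable with θ' > 0, and let f¹, f² : ℝ³ → ℝ be differentiable with ∂₁f¹ + ∂₂f² = 0 and ∂₂f¹ − ∂₁f² = 0 (anti-CR in z₁,z₂, with z₃ a parameter). Define the 3×5 matrix A(t) with rows: row1 = (cos θ, −sin θ, 0, cos θ, sin θ)/√(θ'), row2 = (sin θ, cos θ, 0, −sin θ, cos θ)/√(θ'), row3 = (0,0,θ',0,0), and v = (z₁,z₂,z₃,f¹,f²). Then for φ = Av, det(dφ) = 1 − (∂₁f¹)² − (∂₂f¹)², which is independent of t. -/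
/-- Partial derivatives of f : ℝ³ → ℝ (ℝ³ as ℝ × ℝ × ℝ). -/
noncomputable def qd1 (f : ℝ × ℝ × ℝ → ℝ) (z : ℝ × ℝ × ℝ) : ℝ :=
  fderiv ℝ f z ((1:ℝ), (0:ℝ), (0:ℝ))
noncomputable def qd2 (f : ℝ × ℝ × ℝ → ℝ) (z : ℝ × ℝ × ℝ) : ℝ :=
  fderiv ℝ f z ((0:ℝ), (1:ℝ), (0:ℝ))
noncomputable def qd3 (f : ℝ × ℝ × ℝ → ℝ) (z : ℝ × ℝ × ℝ) : ℝ :=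
  fderiv ℝ f z ((0:ℝ), (0:ℝ), (1:ℝ))

/-!
Write `a = ∂₁f¹`, `b = ∂₂f¹`, `R` for the rotation by `θ` and `S = √θ'`. By the anti-Cauchy–Riemann
equations `∇f² = (b, -a, ∂₃f²)`, so the planar block of `dφ` is `S⁻¹ [[1 + a, b], [b, 1 - a]] R`,
while its last row is `(0, 0, θ')`. The determinant is therefore `θ' S⁻² (1 - a² - b²) det R`,
and `S² = θ'`, `det R = 1`.
-/

open Real

section LinearCombination

variable {f g : ℝ × ℝ × ℝ → ℝ}

theorem fderiv_linear_combination_div (hf : Differentiable ℝ f) (hg : Differentiable ℝ g)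
    (c₁ c₂ c₃ c₄ S : ℝ) (z v : ℝ × ℝ × ℝ) :
    fderiv ℝ (fun z : ℝ × ℝ × ℝ => (c₁ * z.1 + c₂ * z.2.1 + c₃ * f z + c₄ * g z) / S) z v
      = (c₁ * v.1 + c₂ * v.2.1 + c₃ * fderiv ℝ f z v + c₄ * fderiv ℝ g z v) / S := by
  have H : HasFDerivAt
      (fun z : ℝ × ℝ × ℝ => (c₁ * z.1 + c₂ * z.2.1 + c₃ * f z + c₄ * g z) * S⁻¹) _ z :=
    ((((hasFDerivAt_fst.const_mul c₁).add (hasFDerivAt_snd.fst.const_mul c₂)).add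
      ((hf z).hasFDerivAt.const_mul c₃)).add ((hg z).hasFDerivAt.const_mul c₄)).mul_const S⁻¹
  simp only [div_eq_mul_inv, H.fderiv]
  simp only [smul_add, add_apply, smul_apply,
    ContinuousLinearMap.coe_fst', smul_eq_mul, ContinuousLinearMap.comp_apply,
    ContinuousLinearMap.coe_snd']
  ring

theorem qd1_linear_combination_div (hf : Differentiable ℝ f) (hg : Differentiable ℝ g)
    (c₁ c₂ c₃ c₄ S : ℝ) (z : ℝ × ℝ × ℝ) :
    qd1 (fun z => (c₁ * z.1 + c₂ * z.2.1 + c₃ * f z + c₄ * g z) / S) z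
      = (c₁ + c₃ * qd1 f z + c₄ * qd1 g z) / S := by
  simp [qd1, fderiv_linear_combination_div hf hg]

theorem qd2_linear_combination_div (hf : Differentiable ℝ f) (hg : Differentiable ℝ g)
    (c₁ c₂ c₃ c₄ S : ℝ) (z : ℝ × ℝ × ℝ) :
    qd2 (fun z => (c₁ * z.1 + c₂ * z.2.1 + c₃ * f z + c₄ * g z) / S) z
      = (c₂ + c₃ * qd2 f z + c₄ * qd2 g z) / S := by
  simp [qd2, fderiv_linear_combination_div hf hg]

theorem qd3_linear_combination_div (hf : Differentiable ℝ f) (hg : Differentiable ℝ g)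
    (c₁ c₂ c₃ c₄ S : ℝ) (z : ℝ × ℝ × ℝ) :
    qd3 (fun z => (c₁ * z.1 + c₂ * z.2.1 + c₃ * f z + c₄ * g z) / S) z
      = (c₃ * qd3 f z + c₄ * qd3 g z) / S := by
  simp [qd3, fderiv_linear_combination_div hf hg]

end LinearCombination

section ThirdCoordinate

theorem fderiv_const_mul_third (k : ℝ) (z v : ℝ × ℝ × ℝ) :
    fderiv ℝ (fun z : ℝ × ℝ × ℝ => k * z.2.2) z v = k * v.2.2 := by
  rw [(hasFDerivAt_snd.snd.const_mul k).fderiv]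
  simp

variable (k : ℝ) (z : ℝ × ℝ × ℝ)

theorem qd1_const_mul_third : qd1 (fun z => k * z.2.2) z = 0 := by
  simp [qd1, fderiv_const_mul_third]

theorem qd2_const_mul_third : qd2 (fun z => k * z.2.2) z = 0 := by
  simp [qd2, fderiv_const_mul_third]

theorem qd3_const_mul_third : qd3 (fun z => k * z.2.2) z = k := by
  simp [qd3, fderiv_const_mul_third]

end ThirdCoordinate

theorem det_rotated_anti_CR_jacobian {c s S d a b p q : ℝ} (hcs : c ^ 2 + s ^ 2 = 1)
    (hSd : S ^ 2 = d) (hS : S ≠ 0) :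
    !![(c + c * a + s * b) / S, (-s + c * b + s * -a) / S, (c * p + s * q) / S;
       (s + -s * a + c * b) / S, (c + -s * b + c * -a) / S, (-s * p + c * q) / S;
       0, 0, d].det = 1 - a ^ 2 - b ^ 2 := by
  simp only [Matrix.det_fin_three, Matrix.of_apply, Matrix.cons_val', Matrix.cons_val_zero,
    Matrix.cons_val_fin_one, Matrix.cons_val_one, Matrix.cons_val, mul_zero, sub_zero, add_zero]
  subst hSd
  field_simp
  linear_combination (1 - a ^ 2 - b ^ 2) * hcs

theorem det_3x5_solution_general
    (θ : ℝ → ℝ) (hθ' : ∀ t, 0 < deriv θ t)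
    (f1 f2 : ℝ × ℝ × ℝ → ℝ) (hf1 : Differentiable ℝ f1) (hf2 : Differentiable ℝ f2)
    (hCR1 : ∀ z, qd1 f1 z + qd2 f2 z = 0)
    (hCR2 : ∀ z, qd2 f1 z - qd1 f2 z = 0)
    (φ1 φ2 φ3 : ℝ × ℝ × ℝ → ℝ → ℝ)
    (hφ1 : ∀ z t, φ1 z t = (Real.cos (θ t) * z.1 - Real.sin (θ t) * z.2.1
        + Real.cos (θ t) * f1 z + Real.sin (θ t) * f2 z) / Real.sqrt (deriv θ t))
    (hφ2 : ∀ z t, φ2 z t = (Real.sin (θ t) * z.1 + Real.cos (θ t) * z.2.1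
        - Real.sin (θ t) * f1 z + Real.cos (θ t) * f2 z) / Real.sqrt (deriv θ t))
    (hφ3 : ∀ z t, φ3 z t = deriv θ t * z.2.2) :
    ∀ t z,
      Matrix.det !![qd1 (fun z => φ1 z t) z, qd2 (fun z => φ1 z t) z, qd3 (fun z => φ1 z t) z;
                    qd1 (fun z => φ2 z t) z, qd2 (fun z => φ2 z t) z, qd3 (fun z => φ2 z t) z;
                    qd1 (fun z => φ3 z t) z, qd2 (fun z => φ3 z t) z, qd3 (fun z => φ3 z t) z]
        = 1 - (qd1 f1 z) ^ 2 - (qd2 f1 z) ^ 2 := by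
  intro t z
  have eφ1 : (fun z => φ1 z t) = fun z => (cos (θ t) * z.1 + -sin (θ t) * z.2.1
      + cos (θ t) * f1 z + sin (θ t) * f2 z) / √(deriv θ t) :=
    funext fun z => by rw [hφ1]; ring
  have eφ2 : (fun z => φ2 z t) = fun z => (sin (θ t) * z.1 + cos (θ t) * z.2.1
      + -sin (θ t) * f1 z + cos (θ t) * f2 z) / √(deriv θ t) :=
    funext fun z => by rw [hφ2]; ring
  have h12 : qd1 f2 z = qd2 f1 z := by linarith [hCR2 z]
  have h22 : qd2 f2 z = -qd1 f1 z := by linarith [hCR1 z]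
  simp only [eφ1, eφ2, hφ3, qd1_linear_combination_div hf1 hf2, qd2_linear_combination_div hf1 hf2,
    qd3_linear_combination_div hf1 hf2, qd1_const_mul_third, qd2_const_mul_third,
    qd3_const_mul_third, h12, h22]
  exact det_rotated_anti_CR_jacobian (cos_sq_add_sin_sq _) (sq_sqrt (hθ' t).le)
    (sqrt_pos.2 (hθ' t)).ne'

/-- For the 3×5 solution family with θ' > 0 and f¹, f² an anti-CR pair in (z₁,z₂),
φ = Av has det(dφ) = 1 − (∂₁f¹)² − (∂₂f¹)², independent of t. -/
theorem det_3x5_solution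
    (θ : ℝ → ℝ) (hθ : Differentiable ℝ θ) (hθ' : ∀ t, 0 < deriv θ t)
    (f1 f2 : ℝ × ℝ × ℝ → ℝ) (hf1 : Differentiable ℝ f1) (hf2 : Differentiable ℝ f2)
    (hCR1 : ∀ z, qd1 f1 z + qd2 f2 z = 0)
    (hCR2 : ∀ z, qd2 f1 z - qd1 f2 z = 0)
    (φ1 φ2 φ3 : ℝ × ℝ × ℝ → ℝ → ℝ)
    (hφ1 : ∀ z t, φ1 z t = (Real.cos (θ t) * z.1 - Real.sin (θ t) * z.2.1
        + Real.cos (θ t) * f1 z + Real.sin (θ t) * f2 z) / Real.sqrt (deriv θ t))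
    (hφ2 : ∀ z t, φ2 z t = (Real.sin (θ t) * z.1 + Real.cos (θ t) * z.2.1
        - Real.sin (θ t) * f1 z + Real.cos (θ t) * f2 z) / Real.sqrt (deriv θ t))
    (hφ3 : ∀ z t, φ3 z t = deriv θ t * z.2.2) :
    ∀ t z,
      Matrix.det !![qd1 (fun z => φ1 z t) z, qd2 (fun z => φ1 z t) z, qd3 (fun z => φ1 z t) z;
                    qd1 (fun z => φ2 z t) z, qd2 (fun z => φ2 z t) z, qd3 (fun z => φ2 z t) z;
                    qd1 (fun z => φ3 z t) z, qd2 (fun z => φ3 z t) z, qd3 (fun z => φ3 z t) z]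
        = 1 - (qd1 f1 z) ^ 2 - (qd2 f1 z) ^ 2 :=
  det_3x5_solution_general θ hθ' f1 f2 hf1 hf2 hCR1 hCR2 φ1 φ2 φ3 hφ1 hφ2 hφ3
end

section
/- Let ℓ₃ : I → ℝ be differentiable with ℓ₃ ≠ 0, and let a₃ : I → ℝ be differentiable and nonzero, and suppose a₁, a₂, ℓ₁, ℓ₂ satisfy the algebraic relations a₁a₂a₃ = 1, ℓ₁ℓ₂ℓ₃ = 1, ℓ₁'a₁² = −c₁₆, ℓ₂'a₂² = −c₂₄ with c₁₆, c₂₄ ≠ 0 and ℓ₁, ℓ₂ differentiable and nonvanishing with ℓ₁', ℓ₂' nonvanishing. Then u := ℓ₁'/ℓ₁ satisfies the quadratic equation ℓ₃u² + ℓ₃'u + c₁₆c₂₄ℓ₃²a₃² = 0 pointwise on I. -/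
/-!
Differentiating `ℓ₂ = (ℓ₁ ℓ₃)⁻¹` gives `ℓ₂'` in terms of `ℓ₁, ℓ₃` and their derivatives, while
multiplying `ℓ₁' a₁² = -c₁₆` and `ℓ₂' a₂² = -c₂₄` and using `a₁ a₂ = a₃⁻¹` gives
`ℓ₁' ℓ₂' = c₁₆ c₂₄ a₃²`. Substituting the first identity into the second and dividing by `ℓ₁²`
is the quadratic relation for `u = ℓ₁'/ℓ₁`.
-/

open Filter Topology

theorem mul_eq_mul_mul_sq_of_mul_mul_eq_one {R : Type*} [CommRing R] {a₁ a₂ a₃ x y c d : R}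
    (ha : a₁ * a₂ * a₃ = 1) (hx : x * a₁ ^ 2 = -c) (hy : y * a₂ ^ 2 = -d) :
    x * y = c * d * a₃ ^ 2 := by
  linear_combination (-(x * y) * (a₁ * a₂ * a₃ + 1)) * ha + (y * a₂ ^ 2 * a₃ ^ 2) * hx
    + (-c * a₃ ^ 2) * hy

theorem deriv_eq_of_mul_mul_eventually_eq_one {𝕜 : Type*} [NontriviallyNormedField 𝕜]
    {f g h : 𝕜 → 𝕜} {t : 𝕜} (hfgh : ∀ᶠ s in 𝓝 t, f s * g s * h s = 1)
    (hf : DifferentiableAt 𝕜 f t) (hh : DifferentiableAt 𝕜 h t) :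
    deriv g t = -(deriv f t * h t + f t * deriv h t) / (f t * h t) ^ 2 := by
  have hg : g =ᶠ[𝓝 t] fun s => (f s * h s)⁻¹ :=
    hfgh.mono fun s hs => eq_inv_of_mul_eq_one_right (by linear_combination hs)
  have hfh : f t * h t ≠ 0 := left_ne_zero_of_mul_eq_one (b := g t) (by linear_combination hfgh.self_of_nhds)
  exact ((hf.hasDerivAt.mul hh.hasDerivAt).inv hfh).congr_of_eventuallyEq hg |>.deriv

theorem quadratic_relation_for_u_general
    (I : Set ℝ) (hI : IsOpen I)
    (a₁ a₂ a₃ ℓ₁ ℓ₂ ℓ₃ : ℝ → ℝ)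
    (c₁₆ c₂₄ : ℝ)
    (hℓ₁d : ∀ t ∈ I, DifferentiableAt ℝ ℓ₁ t)
    (hℓ₃d : ∀ t ∈ I, DifferentiableAt ℝ ℓ₃ t)
    (haaa : ∀ t ∈ I, a₁ t * a₂ t * a₃ t = 1)
    (hlll : ∀ t ∈ I, ℓ₁ t * ℓ₂ t * ℓ₃ t = 1)
    (h16 : ∀ t ∈ I, deriv ℓ₁ t * (a₁ t) ^ 2 = -c₁₆)
    (h24 : ∀ t ∈ I, deriv ℓ₂ t * (a₂ t) ^ 2 = -c₂₄) :
    ∀ t ∈ I,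
      ℓ₃ t * (deriv ℓ₁ t / ℓ₁ t) ^ 2 + deriv ℓ₃ t * (deriv ℓ₁ t / ℓ₁ t)
        + c₁₆ * c₂₄ * (ℓ₃ t) ^ 2 * (a₃ t) ^ 2 = 0 := by
  intro t ht
  have hℓ₂' := deriv_eq_of_mul_mul_eventually_eq_one
    (eventually_of_mem (hI.mem_nhds ht) hlll) (hℓ₁d t ht) (hℓ₃d t ht)
  have hprod := mul_eq_mul_mul_sq_of_mul_mul_eq_one (haaa t ht) (h16 t ht) (h24 t ht)
  have hℓ₁ : ℓ₁ t ≠ 0 := left_ne_zero_of_mul_eq_one (b := ℓ₂ t * ℓ₃ t) (by linear_combination hlll t ht)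
  have hℓ₃ : ℓ₃ t ≠ 0 := left_ne_zero_of_mul_eq_one (b := ℓ₁ t * ℓ₂ t) (by linear_combination hlll t ht)
  rw [hℓ₂'] at hprod
  field_simp at hprod ⊢
  linear_combination -hprod

/-- Elimination in the m = 6, case 2 system: from a₁a₂a₃ = 1, ℓ₁ℓ₂ℓ₃ = 1,
ℓ₁'a₁² = −c₁₆, ℓ₂'a₂² = −c₂₄, the function u = ℓ₁'/ℓ₁ satisfies
ℓ₃u² + ℓ₃'u + c₁₆c₂₄ℓ₃²a₃² = 0 on the open set I. -/
theorem quadratic_relation_for_u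
    (I : Set ℝ) (hI : IsOpen I)
    (a₁ a₂ a₃ ℓ₁ ℓ₂ ℓ₃ : ℝ → ℝ)
    (c₁₆ c₂₄ : ℝ) (hc₁₆ : c₁₆ ≠ 0) (hc₂₄ : c₂₄ ≠ 0)
    (hℓ₁d : ∀ t ∈ I, DifferentiableAt ℝ ℓ₁ t)
    (hℓ₂d : ∀ t ∈ I, DifferentiableAt ℝ ℓ₂ t)
    (hℓ₃d : ∀ t ∈ I, DifferentiableAt ℝ ℓ₃ t)
    (ha₃d : ∀ t ∈ I, DifferentiableAt ℝ a₃ t)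
    (hℓ₁0 : ∀ t ∈ I, ℓ₁ t ≠ 0) (hℓ₂0 : ∀ t ∈ I, ℓ₂ t ≠ 0) (hℓ₃0 : ∀ t ∈ I, ℓ₃ t ≠ 0)
    (ha₃0 : ∀ t ∈ I, a₃ t ≠ 0)
    (hℓ₁'0 : ∀ t ∈ I, deriv ℓ₁ t ≠ 0) (hℓ₂'0 : ∀ t ∈ I, deriv ℓ₂ t ≠ 0)
    (haaa : ∀ t ∈ I, a₁ t * a₂ t * a₃ t = 1)
    (hlll : ∀ t ∈ I, ℓ₁ t * ℓ₂ t * ℓ₃ t = 1)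
    (h16 : ∀ t ∈ I, deriv ℓ₁ t * (a₁ t) ^ 2 = -c₁₆)
    (h24 : ∀ t ∈ I, deriv ℓ₂ t * (a₂ t) ^ 2 = -c₂₄) :
    ∀ t ∈ I,
      ℓ₃ t * (deriv ℓ₁ t / ℓ₁ t) ^ 2 + deriv ℓ₃ t * (deriv ℓ₁ t / ℓ₁ t)
        + c₁₆ * c₂₄ * (ℓ₃ t) ^ 2 * (a₃ t) ^ 2 = 0 :=
  quadratic_relation_for_u_general I hI a₁ a₂ a₃ ℓ₁ ℓ₂ ℓ₃ c₁₆ c₂₄ hℓ₁d hℓ₃d haaa hlll h16 h24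
end
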